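/- arXiv:1503.03390 — 5 statements merged into one kernel-verified Lean document; each statement's English description precedes it below -/
import Mathlib

section
/- For every even k ≥ 0, the number of walks of length k between two vertices at distance 2 in the cycle C₆ equals the Jacobsthal number J(k) = (2^k - 1)/3. -/
/-- The Jacobsthal numbers: J(0)=0, J(1)=1, J(k)=J(k-1)+2J(k-2). -/
def J : ℕ → ℕ
  | 0 => 0
  | 1 => 1
  | (k+2) => J (k+1) + 2 * J k

/-- The cycle graph on 6 vertices. -/
def C6 : SimpleGraph (ZMod 6) where
  Adj a b := b = a + 1 ∨ a = b + 1
  symm := ⟨fun a b h => Or.symm h⟩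
  loopless := ⟨by intro a h; rcases h with h | h <;> simp at h <;> exact absurd h (by decide)⟩

instance : DecidableRel C6.Adj := fun a b => inferInstanceAs (Decidable (b = a + 1 ∨ a = b + 1))


/-! Over `ℕ`, the square of the adjacency matrix of `C₆` is `1 + P`, where `P` is the 0/1 matrix
of "same parity". Since `P * P = 3 • P`, we get `(1 + j • P) * (1 + P) = 1 + (4j + 1) • P`, and
`J (2m + 2) = 4 J (2m) + 1` turns this into `A ^ (2m) = 1 + J (2m) • P`. Two vertices at distance 2
are distinct and joined by a walk of length 2, so there `P` is 1 and `A ^ (2m)` is `J (2m)`. -/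

theorem three_mul_J : ∀ k, 3 * (J k : ℤ) = 2 ^ k - (-1) ^ k
  | 0 => by simp [J]
  | 1 => by simp [J]
  | k + 2 => by
    have h₁ := three_mul_J (k + 1)
    have h₂ := three_mul_J k
    simp only [J, Nat.cast_add, Nat.cast_mul, Nat.cast_ofNat]
    linear_combination h₁ + 2 * h₂

theorem J_eq_of_even {k : ℕ} (hk : Even k) : (J k : ℚ) = (2 ^ k - 1) / 3 := by
  have h := three_mul_J k
  rw [hk.neg_one_pow] at h
  have : 3 * (J k : ℚ) = 2 ^ k - 1 := by exact_mod_cast h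
  linarith

theorem J_two_mul_succ (m : ℕ) : J (2 * (m + 1)) = 4 * J (2 * m) + 1 := by
  have h₁ := three_mul_J (2 * m)
  have h₂ := three_mul_J (2 * (m + 1))
  rw [Even.neg_one_pow ⟨m, by ring⟩, pow_mul] at h₁
  rw [Even.neg_one_pow ⟨m + 1, by ring⟩, pow_mul, pow_succ] at h₂
  zify
  linarith

theorem one_add_pow_of_mul_self_eq_three_smul {R : Type*} [Semiring R] {P : R}
    (hP : P * P = 3 • P) (m : ℕ) : (1 + P) ^ m = 1 + J (2 * m) • P := by
  induction m with
  | zero => simp [J]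
  | succ m ih =>
    rw [pow_succ, ih, add_mul, one_mul, smul_mul_assoc, mul_one_add, hP, J_two_mul_succ]
    module

def parityMatrix : Matrix (ZMod 6) (ZMod 6) ℕ :=
  Matrix.of fun u v => if u.val % 2 = v.val % 2 then 1 else 0

theorem parityMatrix_mul_self : parityMatrix * parityMatrix = 3 • parityMatrix := by
  decide

theorem C6_adjMatrix_sq : C6.adjMatrix ℕ ^ 2 = 1 + parityMatrix := by
  decide

theorem C6_adjMatrix_pow_two_mul (m : ℕ) :
    C6.adjMatrix ℕ ^ (2 * m) = 1 + J (2 * m) • parityMatrix := by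
  rw [pow_mul, C6_adjMatrix_sq, one_add_pow_of_mul_self_eq_three_smul parityMatrix_mul_self]

theorem parityMatrix_apply_of_dist_eq_two {u v : ZMod 6} (h : C6.dist u v = 2) :
    parityMatrix u v = 1 := by
  have hne : u ≠ v := by rintro rfl; simp at h
  obtain ⟨p, hp⟩ := SimpleGraph.exists_walk_of_dist_ne_zero (show C6.dist u v ≠ 0 by omega)
  have hpos : 0 < (C6.adjMatrix ℕ ^ 2) u v := by
    rw [SimpleGraph.adjMatrix_pow_apply_eq_card_walk, Nat.cast_id, Fintype.card_pos_iff]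
    exact ⟨⟨p, hp.trans h⟩⟩
  rw [C6_adjMatrix_sq, Matrix.add_apply, Matrix.one_apply_ne hne, zero_add] at hpos
  simp only [parityMatrix, Matrix.of_apply] at hpos ⊢
  split_ifs at hpos ⊢ <;> omega

theorem card_walks_C6_dist_two (k : ℕ) (hk : Even k) (u v : ZMod 6) (huv : C6.dist u v = 2) :
    Fintype.card {p : C6.Walk u v // p.length = k} = J k ∧
    (J k : ℚ) = (2 ^ k - 1) / 3 := by
  refine ⟨?_, J_eq_of_even hk⟩
  obtain ⟨m, rfl⟩ := hk.two_dvd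
  have hne : u ≠ v := by rintro rfl; simp at huv
  calc Fintype.card {p : C6.Walk u v // p.length = 2 * m}
      = (C6.adjMatrix ℕ ^ (2 * m)) u v :=
        (SimpleGraph.adjMatrix_pow_apply_eq_card_walk _ _ _).symm
    _ = J (2 * m) := by
        rw [C6_adjMatrix_pow_two_mul, Matrix.add_apply, Matrix.one_apply_ne hne,
          Matrix.smul_apply, parityMatrix_apply_of_dist_eq_two huv, smul_eq_mul, mul_one, zero_add]
end

section
/- Let γ be a proper 3-edge-colouring of GP(3k,k) with colours {1,2,3}. Then for every i ∈ ℤ_{3k}, the three outer edges u_i u_{i+1}, u_{i+k} u_{i+k+1}, u_{i+2k} u_{i+2k+1} are not all the same colour. -/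
/-!
Since `3k = 0` in `ℤ_{3k}`, the inner vertices `v_i, v_{i+k}, v_{i+2k}` span a triangle. In a
proper 3-edge-colouring its three edges use all three colours, so each spoke `u_j v_j` must get
the colour of the triangle edge opposite `v_j`: the three spokes at `u_i, u_{i+k}, u_{i+2k}` use
all three colours too. A common colour of the three outer edges would have to avoid all of them.
-/

/-- The generalised Petersen graph `GP(n,k)`: the vertex `Sum.inl i` is the outer vertex
`u_i`, the vertex `Sum.inr i` is the inner vertex `v_i`, and the edges are
`u_i u_{i+1}`, `u_i v_i` and `v_i v_{i+k}` for `i ∈ ℤ_n`. -/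
def GP (n k : ℕ) : SimpleGraph (ZMod n ⊕ ZMod n) :=
  SimpleGraph.fromRel (fun a b =>
    match a, b with
    | Sum.inl i, Sum.inl j => j = i + 1
    | Sum.inl i, Sum.inr j => j = i
    | Sum.inr i, Sum.inr j => j = i + (k : ZMod n)
    | _, _ => False)

/-- A 1-factorisation of `G`: a set of perfect matchings of `G` partitioning its edge set. -/
def IsOneFactorisation {V : Type*} (G : SimpleGraph V) (P : Set G.Subgraph) : Prop :=
  (∀ M ∈ P, M.IsPerfectMatching) ∧
  P.PairwiseDisjoint (fun M => M.edgeSet) ∧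
  (⋃ M ∈ P, M.edgeSet) = G.edgeSet

/-- A proper edge colouring of `G`: any two distinct edges of `G` sharing a vertex
receive different colours. -/
def IsProperEdgeColoring {V α : Type*} (G : SimpleGraph V) (γ : Sym2 V → α) : Prop :=
  ∀ e f, e ∈ G.edgeSet → f ∈ G.edgeSet → e ≠ f → (∃ v, v ∈ e ∧ v ∈ f) → γ e ≠ γ f

theorem eq_of_ne_of_ne_of_card_eq_three {α : Type*} [Fintype α] (hα : Fintype.card α = 3)
    {a b c d : α} (hab : a ≠ b) (hac : a ≠ c) (hbc : b ≠ c) (hda : d ≠ a) (hdb : d ≠ b) :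
    d = c := by
  classical
  have hcover : ({a, b, c} : Finset α) = Finset.univ :=
    Finset.eq_univ_of_card _ (hα ▸ Finset.card_eq_three.2 ⟨a, b, c, hab, hac, hbc, rfl⟩)
  have hd : d ∈ ({a, b, c} : Finset α) := hcover ▸ Finset.mem_univ d
  simp only [Finset.mem_insert, Finset.mem_singleton] at hd
  tauto

namespace IsProperEdgeColoring

variable {V α : Type*} {G : SimpleGraph V} {γ : Sym2 V → α} {a b c x : V}

theorem ne_of_adj_of_adj (hγ : IsProperEdgeColoring G γ) (hab : G.Adj a b) (hac : G.Adj a c)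
    (hbc : b ≠ c) : γ s(a, b) ≠ γ s(a, c) :=
  hγ _ _ (G.mem_edgeSet.2 hab) (G.mem_edgeSet.2 hac) (mt Sym2.congr_right.1 hbc)
    ⟨a, Sym2.mem_mk_left a b, Sym2.mem_mk_left a c⟩

theorem triangle_colors_ne (hγ : IsProperEdgeColoring G γ)
    (hab : G.Adj a b) (hbc : G.Adj b c) (hca : G.Adj c a) :
    γ s(a, b) ≠ γ s(b, c) ∧ γ s(b, c) ≠ γ s(c, a) ∧ γ s(c, a) ≠ γ s(a, b) := by
  refine ⟨?_, ?_, ?_⟩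
  · simpa only [Sym2.eq_swap] using hγ.ne_of_adj_of_adj hab.symm hbc hca.ne'
  · simpa only [Sym2.eq_swap] using hγ.ne_of_adj_of_adj hbc.symm hca hab.ne'
  · simpa only [Sym2.eq_swap] using hγ.ne_of_adj_of_adj hca.symm hab hbc.ne'

theorem color_eq_of_triangle [Fintype α] (hα : Fintype.card α = 3)
    (hγ : IsProperEdgeColoring G γ) (hab : G.Adj a b) (hbc : G.Adj b c) (hca : G.Adj c a)
    (hax : G.Adj a x) (hxb : x ≠ b) (hxc : x ≠ c) : γ s(a, x) = γ s(b, c) := by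
  obtain ⟨hab_bc, hbc_ca, hca_ab⟩ := hγ.triangle_colors_ne hab hbc hca
  have hx_ca : γ s(a, x) ≠ γ s(c, a) := by
    simpa only [Sym2.eq_swap (a := c)] using hγ.ne_of_adj_of_adj hax hca.symm hxc
  exact eq_of_ne_of_ne_of_card_eq_three hα hca_ab hbc_ca.symm hab_bc
    hx_ca (hγ.ne_of_adj_of_adj hax hab hxb)

end IsProperEdgeColoring

namespace GP

open Sum

variable {n k : ℕ}

theorem adj_outer [Nontrivial (ZMod n)] (i : ZMod n) : (GP n k).Adj (inl i) (inl (i + 1)) := by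
  simp [GP]

theorem adj_spoke (i : ZMod n) : (GP n k).Adj (inl i) (inr i) := by
  simp [GP]

theorem adj_inner (hk : (k : ZMod n) ≠ 0) (i : ZMod n) : (GP n k).Adj (inr i) (inr (i + k)) := by
  simp [GP, hk]

theorem adj_inner_triangle (hk : 1 ≤ k) (i : ZMod (3 * k)) :
    (GP (3 * k) k).Adj (inr i) (inr (i + k)) ∧
    (GP (3 * k) k).Adj (inr (i + k)) (inr (i + 2 * k)) ∧
    (GP (3 * k) k).Adj (inr (i + 2 * k)) (inr i) := by
  have hK : (k : ZMod (3 * k)) ≠ 0 := by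
    rw [Ne, ZMod.natCast_eq_zero_iff]
    exact fun h => absurd (Nat.le_of_dvd (by omega) h) (by omega)
  have h3K : 3 * (k : ZMod (3 * k)) = 0 := by exact_mod_cast ZMod.natCast_self (3 * k)
  refine ⟨adj_inner hK i, ?_, ?_⟩
  · simpa only [two_mul, add_assoc] using adj_inner hK (i + k)
  · have h := adj_inner hK (i + 2 * k)
    rwa [show i + 2 * k + k = i by linear_combination h3K] at h

theorem spoke_color_eq_of_triangle {α : Type*} [Fintype α] (hα : Fintype.card α = 3)
    {γ : Sym2 (ZMod n ⊕ ZMod n) → α} (hγ : IsProperEdgeColoring (GP n k) γ) {a b c : ZMod n}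
    (hab : (GP n k).Adj (inr a) (inr b)) (hbc : (GP n k).Adj (inr b) (inr c))
    (hca : (GP n k).Adj (inr c) (inr a)) :
    γ s(inl a, inr a) = γ s(inr b, inr c) := by
  rw [Sym2.eq_swap]
  exact hγ.color_eq_of_triangle hα hab hbc hca (adj_spoke a).symm inl_ne_inr inl_ne_inr

end GP

theorem outer_triple_not_monochromatic (k : ℕ) (hk : 1 ≤ k)
    (γ : Sym2 (ZMod (3*k) ⊕ ZMod (3*k)) → Fin 3)
    (hγ : IsProperEdgeColoring (GP (3*k) k) γ) (i : ZMod (3*k)) :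
    ¬ (γ s(Sum.inl i, Sum.inl (i + 1)) =
         γ s(Sum.inl (i + (k : ZMod (3*k))), Sum.inl (i + (k : ZMod (3*k)) + 1)) ∧
       γ s(Sum.inl i, Sum.inl (i + 1)) =
         γ s(Sum.inl (i + 2*(k : ZMod (3*k))), Sum.inl (i + 2*(k : ZMod (3*k)) + 1))) := by
  have : Fact (1 < 3 * k) := ⟨by omega⟩
  obtain ⟨hab, hbc, hca⟩ := GP.adj_inner_triangle hk i
  obtain ⟨hab_bc, hbc_ca, hca_ab⟩ := hγ.triangle_colors_ne hab hbc hca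
  have h3 : Fintype.card (Fin 3) = 3 := Fintype.card_fin 3
  have outer_ne (j : ZMod (3 * k)) :
      γ s(Sum.inl j, Sum.inl (j + 1)) ≠ γ s(Sum.inl j, Sum.inr j) :=
    hγ.ne_of_adj_of_adj (GP.adj_outer j) (GP.adj_spoke j) Sum.inl_ne_inr
  rintro ⟨hsame_k, hsame_2k⟩
  have h_bc := GP.spoke_color_eq_of_triangle h3 hγ hab hbc hca ▸ outer_ne i
  have h_ca := GP.spoke_color_eq_of_triangle h3 hγ hbc hca hab ▸ hsame_k ▸ outer_ne (i + k)
  have h_ab :=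
    GP.spoke_color_eq_of_triangle h3 hγ hca hab hbc ▸ hsame_2k ▸ outer_ne (i + 2 * k)
  exact h_ab (eq_of_ne_of_ne_of_card_eq_three h3 hbc_ca hab_bc.symm hca_ab h_bc h_ca)
end

section
/- If a proper 3-edge-colouring of the outer cycle of GP(3k,k) extends to a proper 3-edge-colouring of all of GP(3k,k), then this extension is unique. -/
theorem Fin.three_eq_of_ne_of_ne {a b c d : Fin 3} (hab : a ≠ b) (hca : c ≠ a) (hcb : c ≠ b)
    (hda : d ≠ a) (hdb : d ≠ b) : c = d := by
  omega

namespace IsProperEdgeColoring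

variable {V α : Type*} {G : SimpleGraph V} {a b c v w : V}

theorem apply_ne {γ : Sym2 V → α} (hγ : IsProperEdgeColoring G γ) (hab : G.Adj a b)
    (hac : G.Adj a c) (hbc : b ≠ c) : γ s(a, b) ≠ γ s(a, c) :=
  hγ _ _ hab hac (Sym2.congr_right.not.mpr hbc) ⟨a, Sym2.mem_mk_left _ _, Sym2.mem_mk_left _ _⟩

theorem apply_third_edge_eq {γ γ' : Sym2 V → Fin 3} (hγ : IsProperEdgeColoring G γ)
    (hγ' : IsProperEdgeColoring G γ') (ha : G.Adj v a) (hb : G.Adj v b) (hc : G.Adj v c)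
    (hab : a ≠ b) (hac : a ≠ c) (hbc : b ≠ c)
    (hva : γ s(v, a) = γ' s(v, a)) (hvb : γ s(v, b) = γ' s(v, b)) :
    γ s(v, c) = γ' s(v, c) :=
  Fin.three_eq_of_ne_of_ne (hγ.apply_ne ha hb hab) (hγ.apply_ne hc ha hac.symm)
    (hγ.apply_ne hc hb hbc.symm) (hva ▸ hγ'.apply_ne hc ha hac.symm)
    (hvb ▸ hγ'.apply_ne hc hb hbc.symm)

theorem apply_triangle_eq {γ : Sym2 V → Fin 3} (hγ : IsProperEdgeColoring G γ)
    (hab : G.Adj a b) (hbc : G.Adj b c) (hca : G.Adj c a) (hcw : G.Adj c w)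
    (hwa : w ≠ a) (hwb : w ≠ b) : γ s(a, b) = γ s(c, w) := by
  have hab_ca : γ s(a, b) ≠ γ s(c, a) := by
    rw [Sym2.eq_swap (a := c)]; exact hγ.apply_ne hab hca.symm hbc.ne
  have hab_cb : γ s(a, b) ≠ γ s(c, b) := by
    rw [Sym2.eq_swap (a := a), Sym2.eq_swap (a := c)]; exact hγ.apply_ne hab.symm hbc hca.ne.symm
  exact Fin.three_eq_of_ne_of_ne (hγ.apply_ne hca hbc.symm hab.ne) hab_ca hab_cb
    (hγ.apply_ne hcw hca hwa) (hγ.apply_ne hcw hbc.symm hwb)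

end IsProperEdgeColoring

namespace GP

open IsProperEdgeColoring

variable {n k : ℕ}

theorem adj_inl_add_one (h1 : (1 : ZMod n) ≠ 0) (i : ZMod n) :
    (GP n k).Adj (.inl i) (.inl (i + 1)) := by
  simp [GP, h1]

theorem adj_inl_inr (i : ZMod n) : (GP n k).Adj (.inl i) (.inr i) := by
  simp [GP]

theorem adj_inr_add (hk : (k : ZMod n) ≠ 0) (i : ZMod n) :
    (GP n k).Adj (.inr i) (.inr (i + k)) := by
  simp [GP, hk]

theorem mem_edgeSet_cases {e : Sym2 (ZMod n ⊕ ZMod n)} (he : e ∈ (GP n k).edgeSet) :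
    (∃ i, e = s(.inl i, .inl (i + 1))) ∨ (∃ i, e = s(.inl i, .inr i)) ∨
      ((k : ZMod n) ≠ 0 ∧ ∃ i, e = s(.inr i, .inr (i + k))) := by
  induction e using Sym2.ind with
  | _ a b =>
    rw [SimpleGraph.mem_edgeSet, GP, SimpleGraph.fromRel_adj] at he
    obtain ⟨hne, hr⟩ := he
    rcases a with i | i <;> rcases b with j | j <;> simp only [or_false, false_or] at hr
    · rcases hr with rfl | rfl
      exacts [.inl ⟨i, rfl⟩, .inl ⟨j, Sym2.eq_swap⟩]
    · exact .inr (.inl ⟨i, hr ▸ rfl⟩)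
    · exact .inr (.inl ⟨j, hr ▸ Sym2.eq_swap⟩)
    · have hk : (k : ZMod n) ≠ 0 := by
        rintro hk
        rcases hr with rfl | rfl <;> simp [hk] at hne
      rcases hr with rfl | rfl
      exacts [.inr (.inr ⟨hk, i, rfl⟩), .inr (.inr ⟨hk, j, Sym2.eq_swap⟩)]

theorem spoke_eq {γ γ' : Sym2 (ZMod n ⊕ ZMod n) → Fin 3} (h2 : (2 : ZMod n) ≠ 0)
    (hγ : IsProperEdgeColoring (GP n k) γ) (hγ' : IsProperEdgeColoring (GP n k) γ')
    (houter : ∀ i, γ s(.inl i, .inl (i + 1)) = γ' s(.inl i, .inl (i + 1))) (i : ZMod n) :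
    γ s(.inl i, .inr i) = γ' s(.inl i, .inr i) := by
  have h1 : (1 : ZMod n) ≠ 0 := fun h => h2 (by rw [← one_add_one_eq_two, h, add_zero])
  have hprev : (GP n k).Adj (.inl i) (.inl (i - 1)) := by
    simpa using (adj_inl_add_one h1 (i - 1)).symm
  have hprev_ne_next : (.inl (i - 1) : ZMod n ⊕ ZMod n) ≠ .inl (i + 1) := by
    intro h
    exact h2 (by linear_combination (Sum.inl.inj h).symm)
  refine apply_third_edge_eq hγ hγ' hprev (adj_inl_add_one h1 i) (adj_inl_inr i)
    hprev_ne_next Sum.inl_ne_inr Sum.inl_ne_inr ?_ (houter i)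
  simpa [Sym2.eq_swap] using houter (i - 1)

theorem inner_eq_spoke {γ : Sym2 (ZMod n ⊕ ZMod n) → Fin 3} (h3k : 3 * (k : ZMod n) = 0)
    (hk : (k : ZMod n) ≠ 0) (hγ : IsProperEdgeColoring (GP n k) γ) (i : ZMod n) :
    γ s(.inr i, .inr (i + k)) = γ s(.inl (i + k + k), .inr (i + k + k)) := by
  have hclose : (GP n k).Adj (.inr (i + k + k)) (.inr i) := by
    simpa [add_assoc, ← two_mul, ← add_one_mul, show (2 + 1 : ZMod n) = 3 by norm_num, h3k]
      using adj_inr_add hk (i + k + k)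
  rw [Sym2.eq_swap (a := Sum.inl _)]
  exact hγ.apply_triangle_eq (adj_inr_add hk i) (adj_inr_add hk (i + k)) hclose
    (adj_inl_inr _).symm Sum.inl_ne_inr Sum.inl_ne_inr

end GP

theorem extension_of_outer_colouring_unique_general (k : ℕ)
    (γ₁ γ₂ : Sym2 (ZMod (3*k) ⊕ ZMod (3*k)) → Fin 3)
    (h₁ : IsProperEdgeColoring (GP (3*k) k) γ₁)
    (h₂ : IsProperEdgeColoring (GP (3*k) k) γ₂)
    (houter : ∀ i : ZMod (3*k),
      γ₁ s(Sum.inl i, Sum.inl (i + 1)) = γ₂ s(Sum.inl i, Sum.inl (i + 1))) :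
    ∀ e ∈ (GP (3*k) k).edgeSet, γ₁ e = γ₂ e := by
  have h2 : (2 : ZMod (3*k)) ≠ 0 := by
    have h3k_ndvd : ¬3 * k ∣ 2 := fun h => absurd (dvd_of_mul_right_dvd h) (by decide)
    exact_mod_cast (ZMod.natCast_eq_zero_iff 2 (3*k)).not.mpr h3k_ndvd
  have h3k : 3 * (k : ZMod (3*k)) = 0 := by exact_mod_cast ZMod.natCast_self (3*k)
  have spoke := GP.spoke_eq h2 h₁ h₂ houter
  intro e he
  obtain ⟨i, rfl⟩ | ⟨i, rfl⟩ | ⟨hk, i, rfl⟩ := GP.mem_edgeSet_cases he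
  · exact houter i
  · exact spoke i
  · rw [GP.inner_eq_spoke h3k hk h₁, GP.inner_eq_spoke h3k hk h₂, spoke]

/-- A proper 3-edge-colouring of `GP(3k,k)` is uniquely determined by its restriction to
the outer cycle: two proper colourings agreeing on all outer edges agree on all edges. -/
theorem extension_of_outer_colouring_unique (k : ℕ) (hk : 1 ≤ k)
    (γ₁ γ₂ : Sym2 (ZMod (3*k) ⊕ ZMod (3*k)) → Fin 3)
    (h₁ : IsProperEdgeColoring (GP (3*k) k) γ₁)
    (h₂ : IsProperEdgeColoring (GP (3*k) k) γ₂)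
    (houter : ∀ i : ZMod (3*k),
      γ₁ s(Sum.inl i, Sum.inl (i + 1)) = γ₂ s(Sum.inl i, Sum.inl (i + 1))) :
    ∀ e ∈ (GP (3*k) k).edgeSet, γ₁ e = γ₂ e :=
  extension_of_outer_colouring_unique_general k γ₁ γ₂ h₁ h₂ houter
end

section
/- Define signed walk counts in the signed triangle T_±: the triangle on 3 vertices arranged cyclically where each clockwise directed edge has sign +1 and each counter-clockwise edge has sign -1; the sign of a directed walk is the product of the signs of its arcs. Let t_k^+(2) (resp. t_k^-(2)) denote the number of positive (resp. negative) directed walks of length k from a vertex x to the vertex y that is 2 clockwise steps from x. Then for all k ≥ 1, t_k^+(2) = (2^k - (-1)^k(1 + (-3)^{⌈k/2⌉}))/6 and t_k^-(2) = (2^k - (-1)^k(1 - (-3)^{⌈k/2⌉}))/6. -/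
/-- A directed walk of length `k` in the signed triangle `T_±` (vertex set `ℤ₃`, an arc
`i → i+1` of sign `+1` and an arc `i → i-1` of sign `-1` for each `i`), starting at the
fixed vertex `0`, is encoded by its sequence of steps: `true` is a clockwise step `+1`,
`false` a counter-clockwise step `-1`. `endVertex s` is the end vertex of the walk. -/
def endVertex {k : ℕ} (s : Fin k → Bool) : ZMod 3 :=
  ∑ i, (if s i then 1 else -1)

/-- The sign of a directed walk in `T_±`: the product of the signs of its arcs. -/
def walkSign {k : ℕ} (s : Fin k → Bool) : ℤ :=
  ∏ i, (if s i then 1 else (-1 : ℤ))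

/-- `tPos k ℓ` is the number of positive directed walks of length `k` in `T_±` from `0`
to the vertex `ℓ` clockwise steps away. -/
def tPos (k : ℕ) (ℓ : ZMod 3) : ℕ :=
  Fintype.card {s : Fin k → Bool // endVertex s = ℓ ∧ walkSign s = 1}

/-- `tNeg k ℓ` is the number of negative directed walks of length `k` in `T_±` from `0`
to the vertex `ℓ` clockwise steps away. -/
def tNeg (k : ℕ) (ℓ : ZMod 3) : ℕ :=
  Fintype.card {s : Fin k → Bool // endVertex s = ℓ ∧ walkSign s = -1}

/-! Weight each clockwise arc by `w₊` and each counter-clockwise arc by `w₋`, and let `W_k(ℓ)` be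
the total weight of the walks of length `k` ending at `ℓ`. When `w₊² = w₋²`, walks of length two
reach `ℓ ± 1` with the same weight, and since `∑ ℓ, W_k(ℓ) = (w₊ + w₋)^k` the three-term recurrence
collapses to the scalar one `W_{k+2}(ℓ) = w₊² (w₊ + w₋)^k + (2 w₊ w₋ - w₊²) W_k(ℓ)`.
Unit weights give `t_k^+ + t_k^-`, with `W_{k+2} = 2^k + W_k`; the arc signs give
`t_k^+ - t_k^-`, with `W_{k+2} = -3 W_k` for `k ≥ 1`. Solving both and taking half the sum and
half the difference gives the closed forms. -/

open Finset

lemma endVertex_cons {k : ℕ} (b : Bool) (t : Fin k → Bool) :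
    endVertex (Fin.cons b t : Fin (k + 1) → Bool) = (if b then 1 else -1) + endVertex t := by
  simp [endVertex, Fin.sum_univ_succ]

lemma Fintype.sum_fin_succ_pi {α M : Type*} [Fintype α] [AddCommMonoid M] {k : ℕ}
    (f : (Fin (k + 1) → α) → M) : ∑ s, f s = ∑ a, ∑ t : Fin k → α, f (Fin.cons a t) := by
  rw [← Fintype.sum_prod_type']
  exact (Fintype.sum_equiv (Fin.consEquiv fun _ => α) _ _ fun _ => rfl).symm

lemma ZMod.sum_three {M : Type*} [AddCommMonoid M] (f : ZMod 3 → M) (ℓ : ZMod 3) :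
    ∑ m, f m = f (ℓ - 1) + f ℓ + f (ℓ + 1) := by
  have huniv : (univ : Finset (ZMod 3)) = {ℓ - 1, ℓ, ℓ + 1} := by revert ℓ; decide
  have h₁ : ℓ - 1 ∉ ({ℓ, ℓ + 1} : Finset (ZMod 3)) := by revert ℓ; decide
  have h₂ : ℓ ∉ ({ℓ + 1} : Finset (ZMod 3)) := by revert ℓ; decide
  rw [huniv, sum_insert h₁, sum_insert h₂, sum_singleton, add_assoc]

section WeightedWalks

variable {R : Type*} [CommSemiring R] (w : Bool → R)

def weightedWalkSum (k : ℕ) (ℓ : ZMod 3) : R :=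
  ∑ s : Fin k → Bool with endVertex s = ℓ, ∏ i, w (s i)

lemma weightedWalkSum_zero (ℓ : ZMod 3) :
    weightedWalkSum w 0 ℓ = if ℓ = 0 then 1 else 0 := by
  have h (s : Fin 0 → Bool) : endVertex s = 0 := by simp [endVertex]
  rw [weightedWalkSum, sum_filter, Fintype.sum_unique]
  simp [h, eq_comm]

lemma weightedWalkSum_succ (k : ℕ) (ℓ : ZMod 3) :
    weightedWalkSum w (k + 1) ℓ =
      w true * weightedWalkSum w k (ℓ - 1) + w false * weightedWalkSum w k (ℓ + 1) := by
  have h₁ (e : ZMod 3) : 1 + e = ℓ ↔ e = ℓ - 1 := eq_sub_iff_add_eq'.symm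
  have h₂ (e : ZMod 3) : -1 + e = ℓ ↔ e = ℓ + 1 := by rw [neg_add_eq_iff_eq_add, add_comm]
  simp only [weightedWalkSum, sum_filter]
  rw [Fintype.sum_fin_succ_pi, Fintype.sum_bool, mul_sum, mul_sum]
  simp only [endVertex_cons, Fin.prod_univ_succ, Fin.cons_zero, Fin.cons_succ, if_true,
    Bool.false_eq_true, if_false, h₁, h₂, mul_ite, mul_zero]

lemma sum_weightedWalkSum (k : ℕ) : ∑ ℓ, weightedWalkSum w k ℓ = (w true + w false) ^ k := by
  simp only [weightedWalkSum]
  rw [sum_fiberwise, ← Fintype.sum_bool, ← Fin.prod_const, Fintype.prod_sum]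

end WeightedWalks

lemma weightedWalkSum_add_two {R : Type*} [CommRing R] {w : Bool → R}
    (hw : w true ^ 2 = w false ^ 2) (k : ℕ) (ℓ : ZMod 3) :
    weightedWalkSum w (k + 2) ℓ = w true ^ 2 * (w true + w false) ^ k +
      (2 * w true * w false - w true ^ 2) * weightedWalkSum w k ℓ := by
  have h : ℓ + 1 + 1 = ℓ - 1 := by revert ℓ; decide
  have h' : ℓ - 1 - 1 = ℓ + 1 := by revert ℓ; decide
  rw [weightedWalkSum_succ, weightedWalkSum_succ, weightedWalkSum_succ, sub_add_cancel,
    add_sub_cancel_right, h, h', ← sum_weightedWalkSum, ZMod.sum_three _ ℓ]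
  linear_combination (-weightedWalkSum w k (ℓ - 1)) * hw

lemma weightedWalkSum_one_two (k : ℕ) :
    weightedWalkSum (fun _ => (1 : ℚ)) k 2 = (2 ^ k - (-1) ^ k) / 3 := by
  induction k using Nat.twoStepInduction with
  | zero => simp +decide [weightedWalkSum_zero]
  | one => norm_num +decide [weightedWalkSum_succ, weightedWalkSum_zero]
  | more n ih _ =>
    rw [weightedWalkSum_add_two rfl, ih]
    ring

lemma weightedWalkSum_sign_two (k : ℕ) (hk : 1 ≤ k) :
    weightedWalkSum (fun b => if b then 1 else (-1 : ℚ)) k 2 =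
      -((-1) ^ k * (-3) ^ ((k + 1) / 2)) / 3 := by
  induction k using Nat.twoStepInduction with
  | zero => omega
  | one => simp +decide [weightedWalkSum_succ, weightedWalkSum_zero]
  | more n ih _ =>
    rw [weightedWalkSum_add_two (by norm_num)]
    rcases Nat.eq_zero_or_pos n with rfl | hn
    · simp +decide [weightedWalkSum_zero]
    · rw [ih hn, show (n + 2 + 1) / 2 = (n + 1) / 2 + 1 by omega]
      simp only [↓reduceIte, Bool.false_eq_true, add_neg_cancel, zero_pow hn.ne']
      ring

lemma walkSign_eq_one_or_neg_one {k : ℕ} (s : Fin k → Bool) : walkSign s = 1 ∨ walkSign s = -1 :=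
  prod_induction _ (fun x : ℤ => x = 1 ∨ x = -1)
    (by rintro _ _ (rfl | rfl) (rfl | rfl) <;> simp) (Or.inl rfl)
    fun i _ => by split_ifs <;> simp

lemma sum_walkSign_fiber {M : Type*} [AddCommMonoid M] (f : ℤ → M) (k : ℕ) (ℓ : ZMod 3) :
    ∑ s : Fin k → Bool with endVertex s = ℓ, f (walkSign s) =
      tPos k ℓ • f 1 + tNeg k ℓ • f (-1) := by
  rw [← sum_fiberwise_of_maps_to (t := {1, -1}) (g := walkSign)
    fun s _ => by simpa using walkSign_eq_one_or_neg_one s]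
  have h (σ : ℤ) : ∑ s ∈ {s : Fin k → Bool | endVertex s = ℓ} with walkSign s = σ, f (walkSign s) =
      Fintype.card {s : Fin k → Bool // endVertex s = ℓ ∧ walkSign s = σ} • f σ := by
    rw [Fintype.card_subtype, filter_filter, ← sum_const]
    exact sum_congr rfl fun s hs => by rw [(mem_filter.1 hs).2.2]
  rw [sum_pair (by norm_num), h, h, tPos, tNeg]

lemma tPos_add_tNeg (k : ℕ) (ℓ : ZMod 3) :
    (tPos k ℓ + tNeg k ℓ : ℚ) = weightedWalkSum (fun _ => 1) k ℓ := by
  simpa [weightedWalkSum] using (sum_walkSign_fiber (fun _ => (1 : ℚ)) k ℓ).symm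

lemma tPos_sub_tNeg (k : ℕ) (ℓ : ZMod 3) :
    (tPos k ℓ - tNeg k ℓ : ℚ) = weightedWalkSum (fun b => if b then 1 else -1) k ℓ := by
  have h := sum_walkSign_fiber (fun σ => (σ : ℚ)) k ℓ
  simp only [walkSign, Int.cast_prod, apply_ite (Int.cast : ℤ → ℚ), Int.cast_one, Int.cast_neg,
    nsmul_eq_mul, mul_one, mul_neg] at h
  rw [weightedWalkSum, h, sub_eq_add_neg]

theorem signed_walk_counts_closed_form (k : ℕ) (hk : 1 ≤ k) :
    (tPos k 2 : ℚ) = (2 ^ k - (-1) ^ k * (1 + (-3 : ℚ) ^ ((k + 1) / 2))) / 6 ∧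
    (tNeg k 2 : ℚ) = (2 ^ k - (-1) ^ k * (1 - (-3 : ℚ) ^ ((k + 1) / 2))) / 6 := by
  have hsum := tPos_add_tNeg k 2
  have hdiff := tPos_sub_tNeg k 2
  rw [weightedWalkSum_one_two] at hsum
  rw [weightedWalkSum_sign_two k hk] at hdiff
  constructor
  · linear_combination (hsum + hdiff) / 2
  · linear_combination (hsum - hdiff) / 2
end

section
/- Every generalised Petersen graph GP(3k,k) with k ≥ 2 has a proper 3-edge-colouring; equivalently, its edge set can be partitioned into 3 perfect matchings. -/
/-!
Split `ℤ_{3k}` into three blocks of `k` consecutive indices, `m = q k + t` with `t < k`, and colour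
with `ℤ_3`. The spoke `u_m v_m` gets `q`, the outer edge `u_m u_{m+1}` gets `q + 2` or `q + 1`
according to the parity of `t`, and the inner edge `v_m v_{m+k}` gets the spoke colour plus `2`.
As `v_m v_{m+k}` joins consecutive blocks, the spoke colour rises by one along it, so the colours
at `v_m` are `s`, `s + 2`, `s + 1`. On the outer cycle the alternation is proper inside a block;
across a block boundary it fits as is when `k` is odd, and when `k` is even after raising the
spoke at `t = 0` by one.
-/

theorem isProperEdgeColoring_of_injOn {V α : Type*} {G : SimpleGraph V} {γ : Sym2 V → α}
    (h : ∀ v, Set.InjOn (fun w => γ s(v, w)) (G.neighborSet v)) :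
    IsProperEdgeColoring G γ := by
  rintro e f he hf hne ⟨v, hve, hvf⟩ hγ
  obtain ⟨w₁, rfl⟩ := Sym2.mem_iff_exists.mp hve
  obtain ⟨w₂, rfl⟩ := Sym2.mem_iff_exists.mp hvf
  exact hne (congrArg _ (h v he hf hγ))

theorem Set.injOn_triple {α β : Type*} {f : α → β} {x y z : α}
    (hxy : f x ≠ f y) (hxz : f x ≠ f z) (hyz : f y ≠ f z) : Set.InjOn f {x, y, z} := by
  rintro a (rfl | rfl | rfl) b (rfl | rfl | rfl) h <;> first | rfl | simp_all

theorem ZMod.self_ne_add_add {n m : ℕ} (h : ¬ n ∣ 2 * m) (i : ZMod n) : i ≠ i + m + m := by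
  intro he
  apply h
  rw [← ZMod.natCast_eq_zero_iff]
  push_cast
  linear_combination -he

theorem Function.Periodic.apply_val_add_natCast {α : Type*} {n : ℕ} [NeZero n] {f : ℕ → α}
    (hf : Function.Periodic f n) (i : ZMod n) (m : ℕ) : f (i + m).val = f (i.val + m) := by
  rw [ZMod.val_add, ZMod.val_natCast, Nat.add_mod_mod, hf.map_mod_nat]

namespace GP

variable {n k : ℕ}

theorem neighborSet_inl_subset (i : ZMod n) :
    (GP n k).neighborSet (.inl i) ⊆ {.inl (i + 1), .inl (i - 1), .inr i} := by
  rintro (j | j) h <;>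
    simp only [SimpleGraph.mem_neighborSet, GP, SimpleGraph.fromRel_adj] at h <;>
    simp only [Set.mem_insert_iff, Set.mem_singleton_iff, Sum.inl.injEq, Sum.inr.injEq,
      reduceCtorEq, or_false, false_or]
  · rcases h.2 with h | h
    · exact .inl h
    · exact .inr (eq_sub_of_add_eq h.symm)
  · rcases h.2 with h | h
    · exact h
    · exact h.elim

theorem neighborSet_inr_subset (i : ZMod n) :
    (GP n k).neighborSet (.inr i) ⊆ {.inr (i + k), .inr (i - k), .inl i} := by
  rintro (j | j) h <;>
    simp only [SimpleGraph.mem_neighborSet, GP, SimpleGraph.fromRel_adj] at h <;>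
    simp only [Set.mem_insert_iff, Set.mem_singleton_iff, Sum.inl.injEq, Sum.inr.injEq,
      reduceCtorEq, or_false, false_or]
  · rcases h.2 with h | h
    · exact h.elim
    · exact h.symm
  · rcases h.2 with h | h
    · exact .inl h
    · exact .inr (eq_sub_of_add_eq h.symm)

section EdgeColour

variable {α : Type*} [Inhabited α] (outer spoke inner : ZMod n → α)

variable (k) in
def edgeColour : ZMod n ⊕ ZMod n → ZMod n ⊕ ZMod n → α
  | .inl i, .inl j => if j = i + 1 then outer i else if i = j + 1 then outer j else default
  | .inl i, .inr _ => spoke i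
  | .inr _, .inl j => spoke j
  | .inr i, .inr j => if j = i + k then inner i else if i = j + k then inner j else default

theorem edgeColour_comm (hn : ¬ n ∣ 2) (hnk : ¬ n ∣ 2 * k) (a b : ZMod n ⊕ ZMod n) :
    edgeColour k outer spoke inner a b = edgeColour k outer spoke inner b a := by
  have h₁ : ∀ i : ZMod n, i ≠ i + 1 + 1 := by
    simpa using ZMod.self_ne_add_add (m := 1) (by rwa [mul_one])
  have hₖ := ZMod.self_ne_add_add hnk
  rcases a with i | i <;> rcases b with j | j <;> simp only [edgeColour]
  · by_cases h : j = i + 1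
    · subst h; simp [h₁ i]
    · by_cases h' : i = j + 1
      · subst h'; simp [h₁ j]
      · simp [h, h']
  · by_cases h : j = i + k
    · subst h; simp [hₖ i]
    · by_cases h' : i = j + k
      · subst h'; simp [hₖ j]
      · simp [h, h']

@[simp]
theorem edgeColour_inl_add_one (i : ZMod n) :
    edgeColour k outer spoke inner (.inl i) (.inl (i + 1)) = outer i := by
  simp [edgeColour]

theorem edgeColour_inl_sub_one (hn : ¬ n ∣ 2) (i : ZMod n) :
    edgeColour k outer spoke inner (.inl i) (.inl (i - 1)) = outer (i - 1) := by
  have := ZMod.self_ne_add_add (m := 1) (by rwa [mul_one]) (i - 1)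
  rw [Nat.cast_one, sub_add_cancel] at this
  simp [edgeColour, this]

@[simp]
theorem edgeColour_inr_add (i : ZMod n) :
    edgeColour k outer spoke inner (.inr i) (.inr (i + k)) = inner i := by
  simp [edgeColour]

theorem edgeColour_inr_sub (hnk : ¬ n ∣ 2 * k) (i : ZMod n) :
    edgeColour k outer spoke inner (.inr i) (.inr (i - k)) = inner (i - k) := by
  have := ZMod.self_ne_add_add hnk (i - k)
  rw [sub_add_cancel] at this
  simp [edgeColour, this]

theorem exists_isProperEdgeColoring (hn : ¬ n ∣ 2) (hnk : ¬ n ∣ 2 * k)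
    (h_outer : ∀ i, outer i ≠ outer (i - 1) ∧ outer i ≠ spoke i ∧ outer (i - 1) ≠ spoke i)
    (h_inner : ∀ i, inner i ≠ inner (i - k) ∧ inner i ≠ spoke i ∧ inner (i - k) ≠ spoke i) :
    ∃ γ : Sym2 (ZMod n ⊕ ZMod n) → α, IsProperEdgeColoring (GP n k) γ := by
  refine ⟨Sym2.lift ⟨edgeColour k outer spoke inner, edgeColour_comm _ _ _ hn hnk⟩,
    isProperEdgeColoring_of_injOn ?_⟩
  rintro (i | i)
  · obtain ⟨h₁, h₂, h₃⟩ := h_outer i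
    refine (Set.injOn_triple ?_ ?_ ?_).mono (neighborSet_inl_subset i) <;>
      simpa [edgeColour_inl_sub_one _ _ _ hn]
  · obtain ⟨h₁, h₂, h₃⟩ := h_inner i
    refine (Set.injOn_triple ?_ ?_ ?_).mono (neighborSet_inr_subset i) <;>
      simpa [edgeColour_inr_sub _ _ _ hnk]

end EdgeColour

variable (k)

def blockColour (shift : ℕ → ZMod 3) (m : ℕ) : ZMod 3 := ((m / k : ℕ) : ZMod 3) + shift (m % k)

def spokeShift (t : ℕ) : ZMod 3 := if t = 0 ∧ Even k then 1 else 0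

def outerShift (t : ℕ) : ZMod 3 := if Even t then 2 else 1

variable {k}

theorem blockColour_mul_add (shift : ℕ → ZMod 3) (q : ℕ) {t : ℕ} (ht : t < k) :
    blockColour k shift (q * k + t) = q + shift t := by
  have hk : 0 < k := by omega
  rw [blockColour, add_comm (q * k), Nat.add_mul_div_right _ _ hk, Nat.add_mul_mod_self_right,
    Nat.div_eq_of_lt ht, Nat.mod_eq_of_lt ht, zero_add]

theorem blockColour_add_self (hk : 0 < k) (shift : ℕ → ZMod 3) (m : ℕ) :
    blockColour k shift (m + k) = blockColour k shift m + 1 := by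
  rw [blockColour, blockColour, Nat.add_div_right m hk, Nat.add_mod_right]
  push_cast
  ring

theorem periodic_blockColour (hk : 0 < k) (shift : ℕ → ZMod 3) :
    Function.Periodic (blockColour k shift) (3 * k) := by
  intro m
  rw [show m + 3 * k = m + k + k + k by ring, blockColour_add_self hk, blockColour_add_self hk,
    blockColour_add_self hk]
  ring_nf
  reduce_mod_char

theorem outerShift_ne_spokeShift (t : ℕ) : outerShift t ≠ spokeShift k t := by
  unfold outerShift spokeShift
  split_ifs <;> first | decide | simp_all

theorem outerShift_ne_zero (t : ℕ) : outerShift t ≠ 0 := by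
  unfold outerShift
  split_ifs <;> decide

theorem outerShift_add_one_ne (t : ℕ) : outerShift (t + 1) ≠ outerShift t := by
  unfold outerShift
  simp only [Nat.even_add_one]
  split_ifs <;> decide

theorem outerShift_ne_one_add_spokeShift (t : ℕ) : outerShift t ≠ 1 + spokeShift (t + 1) 0 := by
  unfold outerShift spokeShift
  simp only [Nat.even_add_one, true_and]
  split_ifs <;> decide

theorem blockColour_outerShift_ne_spokeShift (m : ℕ) :
    blockColour k outerShift m ≠ blockColour k (spokeShift k) m :=
  (add_right_inj _).ne.mpr (outerShift_ne_spokeShift _)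

theorem blockColour_outerShift_add_one (hk : 0 < k) (m : ℕ) :
    blockColour k outerShift (m + 1) ≠ blockColour k outerShift m ∧
      blockColour k outerShift m ≠ blockColour k (spokeShift k) (m + 1) := by
  obtain ⟨q, t, ht, rfl⟩ : ∃ q t, t < k ∧ m = q * k + t :=
    ⟨m / k, m % k, Nat.mod_lt m hk, (Nat.div_add_mod' m k).symm⟩
  obtain ht' | rfl : t + 1 < k ∨ t + 1 = k := by omega
  · simp only [add_assoc, blockColour_mul_add _ _ ht', blockColour_mul_add _ _ ht, ne_eq,
      add_right_inj]
    exact ⟨outerShift_add_one_ne t, by simpa [spokeShift] using outerShift_ne_zero t⟩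
  · simp only [show q * (t + 1) + t + 1 = (q + 1) * (t + 1) + 0 by ring,
      blockColour_mul_add _ _ ht, blockColour_mul_add _ _ (Nat.succ_pos t),
      Nat.cast_add, Nat.cast_one, add_assoc, ne_eq, add_right_inj]
    exact ⟨fun h => outerShift_ne_zero t (by rw [← h]; decide),
      outerShift_ne_one_add_spokeShift t⟩

end GP

theorem GP_three_edge_colourable (k : ℕ) (hk : 2 ≤ k) :
    ∃ γ : Sym2 (ZMod (3*k) ⊕ ZMod (3*k)) → Fin 3,
      IsProperEdgeColoring (GP (3*k) k) γ := by
  have hk₀ : 0 < k := by omega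
  have : NeZero (3 * k) := ⟨by omega⟩
  let spoke (i : ZMod (3 * k)) := GP.blockColour k (GP.spokeShift k) i.val
  let outer (i : ZMod (3 * k)) := GP.blockColour k GP.outerShift i.val
  have h_val_add (f : ℕ → ZMod 3) (i : ZMod (3 * k)) (m : ℕ) :
      GP.blockColour k f (i + m).val = GP.blockColour k f (i.val + m) :=
    (GP.periodic_blockColour hk₀ f).apply_val_add_natCast i m
  refine GP.exists_isProperEdgeColoring (α := ZMod 3) outer spoke (spoke · + 2)
    (fun h => ?_) (fun h => ?_) (fun i => ?_) (fun i => ?_)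
  · have := Nat.le_of_dvd two_pos h
    omega
  · have := Nat.le_of_dvd (by omega) h
    omega
  · obtain ⟨j, rfl⟩ : ∃ j, i = j + 1 := ⟨i - 1, by ring⟩
    obtain ⟨h₁, h₂⟩ := GP.blockColour_outerShift_add_one hk₀ j.val
    rw [add_sub_cancel_right, ← Nat.cast_one]
    simp only [outer, spoke, h_val_add]
    exact ⟨h₁, GP.blockColour_outerShift_ne_spokeShift _, h₂⟩
  · obtain ⟨j, rfl⟩ : ∃ j, i = j + k := ⟨i - k, by ring⟩
    simp only [spoke, add_sub_cancel_right, h_val_add, GP.blockColour_add_self hk₀]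
    generalize GP.blockColour k (GP.spokeShift k) j.val = s
    revert s
    decide
end
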